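/- Let M be a loopless matroid on a finite ground set E, B a building set for M, N a nested set, Z ∈ N, and X, Y ∈ N ∖ {Z}. If Y covers X in N (i.e., X ⊊ Y and there is no W ∈ N with X ⊊ W ⊊ Y), then τ_Z(Y) covers τ_Z(X) in τ_Z(N): τ_Z(X) ⊊ τ_Z(Y) and there is no W ∈ N ∖ {Z} with τ_Z(X) ⊊ τ_Z(W) ⊊ τ_Z(Y). -/

import Mathlib

open Set Matroid
open scoped Matroid

variable {α : Type*}

/-- Two sets are incomparable under inclusion. -/
def Incomp (X Y : Set α) : Prop := ¬ X ⊆ Y ∧ ¬ Y ⊆ X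

/-- The inclusion-maximal elements of a family of sets. -/
def maxB (B : Set (Set α)) : Set (Set α) := {X ∈ B | ∀ Y ∈ B, X ⊆ Y → X = Y}

/-- The rank of a set in a matroid: the largest size of an independent subset. -/
noncomputable def mrank (M : Matroid α) (X : Set α) : ℕ :=
  sSup {n : ℕ | ∃ I ⊆ X, M.Indep I ∧ I.ncard = n}

/-- A matroid is loopless if every singleton of the ground set is independent. -/
def MLoopless (M : Matroid α) : Prop := ∀ e ∈ M.E, M.Indep {e}

/-- A matroid is connected if its rank function is not additive over any
separation of the ground set into two nonempty parts. -/
def MConnected (M : Matroid α) : Prop :=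
  ∀ A B : Set α, A ∪ B = M.E → Disjoint A B → A.Nonempty → B.Nonempty →
    mrank M A + mrank M B ≠ mrank M M.E

/-- A building set for a matroid `M`: a set of nonempty flats containing all nonempty
flats whose restriction is connected, and closed under joins of intersecting members. -/
def IsBuildingSet (M : Matroid α) (B : Set (Set α)) : Prop :=
  (∀ X ∈ B, M.IsFlat X ∧ X.Nonempty) ∧
  (∀ X, M.IsFlat X → X.Nonempty → MConnected (M.restrict X) → X ∈ B) ∧
  (∀ X ∈ B, ∀ Y ∈ B, (X ∩ Y).Nonempty → M.closure (X ∪ Y) ∈ B)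

/-- A nested set of a building set `B`. -/
def IsNested (M : Matroid α) (B N : Set (Set α)) : Prop :=
  N ⊆ B ∧ maxB B ⊆ N ∧
  ∀ S : Set (Set α), S ⊆ N → S.Nontrivial → S.Pairwise Incomp →
    M.closure (⋃₀ S) ∉ B

/-- An inclusion-maximal nested set. -/
def IsMaxNested (M : Matroid α) (B N : Set (Set α)) : Prop :=
  IsNested M B N ∧ ∀ N', IsNested M B N' → N ⊆ N' → N' = N

/-- An atom of a matroid: a rank-one flat. -/
def IsAtomFlat (M : Matroid α) (A : Set α) : Prop := M.IsFlat A ∧ mrank M A = 1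

/-- Atoms are compared by their least elements. -/
def atomLE [Preorder α] (A A' : Set α) : Prop :=
  ∃ a a', IsLeast A a ∧ IsLeast A' a' ∧ a ≤ a'

/-- Strict comparison of atoms by their least elements. -/
def atomLT [Preorder α] (A A' : Set α) : Prop :=
  ∃ a a', IsLeast A a ∧ IsLeast A' a' ∧ a < a'

/-- `A` is an admissible label for `X` within the family `S`:
an atom contained in `X` but in no member of `S` properly below `X`. -/
def GoodLabel (M : Matroid α) (S : Set (Set α)) (X A : Set α) : Prop :=
  IsAtomFlat M A ∧ A ⊆ X ∧ ∀ Y ∈ S, Y ⊂ X → ¬ A ⊆ Y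

/-- `A` is the label `m_S(X)`: the least admissible label for `X` within `S`. -/
def IsMinLabel [Preorder α] (M : Matroid α) (S : Set (Set α)) (X A : Set α) : Prop :=
  GoodLabel M S X A ∧ ∀ A', GoodLabel M S X A' → atomLE A A'

/-- `NLListing M N R L` : `L` is the NL-listing of the remaining family `R`
(labels computed with respect to the whole family `N`), obtained by repeatedly
plucking the inclusion-minimal member with least label. -/
inductive NLListing [Preorder α] (M : Matroid α) (N : Set (Set α)) :
    Set (Set α) → List (Set α × Set α) → Prop
  | nil : NLListing M N ∅ []
  | cons {R : Set (Set α)} {X A : Set α} {L : List (Set α × Set α)} :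
      X ∈ R →
      (∀ Y ∈ R, Y ⊆ X → Y = X) →
      IsMinLabel M N X A →
      (∀ Y ∈ R, (∀ W ∈ R, W ⊆ Y → W = Y) → ∀ A', IsMinLabel M N Y A' → atomLE A A') →
      NLListing M N (R \ {X}) L →
      NLListing M N R ((X, A) :: L)

/-- A descent of a list of atoms at position `i`. -/
def HasDescentAt [Preorder α] (L : List (Set α)) (i : ℕ) : Prop :=
  ∃ h : i + 1 < L.length, atomLT (L.get ⟨i + 1, h⟩) (L.get ⟨i, Nat.lt_of_succ_lt h⟩)

/-- The indicator vector of a set. -/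
noncomputable def indVec (X : Set α) : α → ℝ := X.indicator 1

/-- `v` is the vertex of the nested set `N` for the weight vector `c`. -/
def IsVertex (M : Matroid α) (B : Set (Set α)) (c : Set α → ℝ) (N : Set (Set α))
    (v : α → ℝ) : Prop :=
  (∀ X ∈ N, ∑ᶠ a ∈ X, v a = c X) ∧
  ∃ lam mu : Set α → ℝ,
    (∀ X ∈ N \ maxB B, 0 < lam X) ∧
    v = (∑ᶠ X ∈ N \ maxB B, lam X • indVec X) + ∑ᶠ Y ∈ maxB B, mu Y • indVec Y

/-- `c` is cubical: every nested set has a unique vertex. -/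
def IsCubical (M : Matroid α) (B : Set (Set α)) (c : Set α → ℝ) : Prop :=
  ∀ N, IsNested M B N → ∃! v, IsVertex M B c N v

/-- Lexicographic comparison of vectors in `ℝ^E`. -/
def lexLt [LinearOrder α] (u v : α → ℝ) : Prop :=
  ∃ i, u i < v i ∧ ∀ j, j < i → u j = v j

open Classical in
/-- The map `τ_Z`. -/
noncomputable def tau (M : Matroid α) (Z X : Set α) : Set α :=
  if X ⊆ Z then X else M.closure (X ∪ Z) \ Z

/-- `MZ` is the contraction `M ／ Z`. -/
def IsContraction (M MZ : Matroid α) (Z : Set α) : Prop :=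
  MZ.E = M.E \ Z ∧
  ∀ I : Set α, MZ.Indep I ↔ I ⊆ M.E \ Z ∧ ∃ J, M.IsBasis J Z ∧ M.Indep (I ∪ J)



set_option linter.unusedSectionVars false
set_option linter.unusedVariables false

section RankAux
variable [Fintype α] {M : Matroid α} {X Y G I J : Set α}

private lemma mrank_bdd (M : Matroid α) (X : Set α) :
    BddAbove {n : ℕ | ∃ I ⊆ X, M.Indep I ∧ I.ncard = n} := by
  refine ⟨Fintype.card α, ?_⟩
  rintro n ⟨I, -, -, rfl⟩
  simpa [Set.ncard_univ] using Set.ncard_le_ncard (Set.subset_univ I) Set.finite_univ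

lemma ncard_le_mrank (hIX : I ⊆ X) (hI : M.Indep I) : I.ncard ≤ mrank M X :=
  le_csSup (mrank_bdd M X) ⟨I, hIX, hI, rfl⟩

lemma exists_mrank_witness (M : Matroid α) (X : Set α) :
    ∃ I ⊆ X, M.Indep I ∧ I.ncard = mrank M X := by
  have hne : Set.Nonempty {n : ℕ | ∃ I ⊆ X, M.Indep I ∧ I.ncard = n} :=
    ⟨0, ∅, empty_subset X, M.empty_indep, by simp⟩
  exact Nat.sSup_mem hne (mrank_bdd M X)

lemma mrank_mono (h : X ⊆ Y) : mrank M X ≤ mrank M Y := by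
  obtain ⟨I, hIX, hI, hc⟩ := exists_mrank_witness M X
  exact hc ▸ ncard_le_mrank (hIX.trans h) hI

lemma Matroid.IsBasis.mrank_eq (hI : M.IsBasis I X) : mrank M X = I.ncard := by
  refine le_antisymm ?_ (ncard_le_mrank hI.subset hI.indep)
  obtain ⟨J, hJX, hJ, hc⟩ := exists_mrank_witness M X
  obtain ⟨J', hJ', hJJ'⟩ := hJ.subset_isBasis_of_subset hJX hI.subset_ground
  have h1 : J.ncard ≤ J'.ncard := Set.ncard_le_ncard hJJ' (Set.toFinite _)
  have h3 : J'.ncard = I.ncard := by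
    rw [Set.ncard_def, hJ'.encard_eq_encard hI, ← Set.ncard_def]
  rw [← hc]; exact h1.trans h3.le

lemma mrank_closure_eq (hX : X ⊆ M.E) : mrank M (M.closure X) = mrank M X := by
  obtain ⟨I, hI⟩ := M.exists_isBasis X hX
  rw [hI.isBasis_closure_right.mrank_eq, hI.mrank_eq]

lemma mrank_empty (M : Matroid α) : mrank M (∅ : Set α) = 0 := by
  obtain ⟨I, hIe, -, hc⟩ := exists_mrank_witness M ∅
  rw [← hc, Set.subset_empty_iff.mp hIe, Set.ncard_empty]

lemma one_le_mrank (hM : MLoopless M) (hX : X ⊆ M.E) (hne : X.Nonempty) :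
    1 ≤ mrank M X := by
  obtain ⟨e, he⟩ := hne
  simpa using ncard_le_mrank (Set.singleton_subset_iff.mpr he) (hM e (hX he))

lemma eq_empty_of_mrank_eq_zero (hM : MLoopless M) (hX : X ⊆ M.E)
    (h : mrank M X = 0) : X = ∅ := by
  by_contra hne
  have := one_le_mrank hM hX (Set.nonempty_iff_ne_empty.mpr hne)
  omega

lemma mrank_union_le (M : Matroid α) (X Y : Set α) :
    mrank M (X ∪ Y) ≤ mrank M X + mrank M Y := by
  obtain ⟨I, hIXY, hI, hc⟩ := exists_mrank_witness M (X ∪ Y)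
  rw [← hc]
  have h1 : (I ∩ X).ncard + (I \ X).ncard = I.ncard :=
    Set.ncard_inter_add_ncard_diff_eq_ncard I X
  have h2 : (I ∩ X).ncard ≤ mrank M X :=
    ncard_le_mrank inter_subset_right (hI.subset inter_subset_left)
  have h3 : (I \ X).ncard ≤ mrank M Y :=
    ncard_le_mrank (fun e he => (hIXY he.1).resolve_left he.2) (hI.subset Set.diff_subset)
  omega

lemma mrank_sUnion_le (M : Matroid α) (𝒦 : Finset (Set α)) :
    mrank M (⋃₀ ↑𝒦) ≤ ∑ K ∈ 𝒦, mrank M K := by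
  classical
  induction 𝒦 using Finset.induction with
  | empty => simp [mrank_empty]
  | @insert a s ha ih =>
    rw [Finset.coe_insert, Set.sUnion_insert, Finset.sum_insert ha]
    exact (mrank_union_le M a (⋃₀ ↑s)).trans (Nat.add_le_add_left ih _)

lemma mrank_submod (hX : X ⊆ M.E) (hY : Y ⊆ M.E) :
    mrank M (X ∪ Y) + mrank M (X ∩ Y) ≤ mrank M X + mrank M Y := by
  obtain ⟨I, hI⟩ := M.exists_isBasis (X ∩ Y) (inter_subset_left.trans hX)
  obtain ⟨J, hJ, hIJ⟩ := hI.indep.subset_isBasis_of_subset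
    (hI.subset.trans (inter_subset_left.trans subset_union_left)) (union_subset hX hY)
  rw [hJ.mrank_eq, hI.mrank_eq]
  have hsplit : (J ∩ X).ncard + (J \ X).ncard = J.ncard :=
    Set.ncard_inter_add_ncard_diff_eq_ncard J X
  have h2 : (J ∩ X).ncard ≤ mrank M X :=
    ncard_le_mrank inter_subset_right (hJ.indep.subset inter_subset_left)
  have hd : Disjoint (J \ X) I := Set.disjoint_left.mpr
    (fun e he hei => he.2 ((hI.subset hei).1))
  have hunion_sub : (J \ X) ∪ I ⊆ Y := union_subset
    (fun e he => ((hJ.subset he.1).resolve_left he.2)) (hI.subset.trans inter_subset_right)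
  have hind : M.Indep ((J \ X) ∪ I) := hJ.indep.subset (union_subset Set.diff_subset hIJ)
  have h3 : (J \ X).ncard + I.ncard ≤ mrank M Y := by
    have h := ncard_le_mrank hunion_sub hind
    rwa [Set.ncard_union_eq hd] at h
  omega

lemma flat_eq_of_mrank_le (hXf : M.IsFlat X) (hGf : M.IsFlat G) (hXG : X ⊆ G)
    (hr : mrank M G ≤ mrank M X) : X = G := by
  obtain ⟨I, hI⟩ := M.exists_isBasis X hXf.subset_ground
  obtain ⟨J, hJ, hIJ⟩ := hI.indep.subset_isBasis_of_subset (hI.subset.trans hXG)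
    hGf.subset_ground
  have hcard : J.ncard ≤ I.ncard := by rw [← hI.mrank_eq, ← hJ.mrank_eq]; exact hr
  have hIJ' : I = J := Set.eq_of_subset_of_ncard_le hIJ hcard (Set.toFinite J)
  refine hXG.antisymm ?_
  have := hJ.subset_closure
  rwa [← hIJ', hI.closure_eq_closure, hXf.closure] at this

lemma mrank_restrict (M : Matroid α) {R : Set α} (hXR : X ⊆ R) :
    mrank (M.restrict R) X = mrank M X := by
  unfold mrank
  congr 1
  ext n
  constructor
  · rintro ⟨I, hIX, hI, rfl⟩
    exact ⟨I, hIX, (Matroid.restrict_indep_iff.mp hI).1, rfl⟩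
  · rintro ⟨I, hIX, hI, rfl⟩
    exact ⟨I, hIX, Matroid.restrict_indep_iff.mpr ⟨hI, hIX.trans hXR⟩, rfl⟩

lemma closure_flat' (M : Matroid α) (X : Set α) : M.IsFlat (M.closure X) := by
  rw [Matroid.closure_def]
  have : Nonempty ({F : Set α | M.IsFlat F ∧ X ∩ M.E ⊆ F}) :=
    ⟨⟨M.E, M.ground_isFlat, inter_subset_right⟩⟩
  rw [Set.sInter_eq_iInter]
  exact Matroid.IsFlat.iInter fun F => F.2.1

end RankAux

section Decomp
variable [Fintype α] {M : Matroid α} {B : Set (Set α)}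

lemma decomp (hM : MLoopless M) :
    ∀ (n : ℕ) (F : Set α), mrank M F = n → M.IsFlat F → F.Nonempty →
    ∃ 𝒦 : Finset (Set α),
      (∀ K ∈ 𝒦, M.IsFlat K ∧ K.Nonempty ∧ MConnected (M.restrict K)) ∧
      ⋃₀ ↑𝒦 = F ∧ ∑ K ∈ 𝒦, mrank M K = mrank M F := by
  intro n
  induction n using Nat.strong_induction_on with
  | _ n ih =>
  intro F hrn hF hFne
  classical
  by_cases hc : MConnected (M.restrict F)
  · exact ⟨{F}, by simp [hF, hFne, hc], by simp, by simp⟩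
  · have hFE : F ⊆ M.E := hF.subset_ground
    simp only [MConnected, not_forall] at hc
    obtain ⟨A, C, hAC, hdis, hAne, hCne, hsum⟩ := hc
    rw [not_ne_iff] at hsum
    rw [Matroid.restrict_ground_eq] at hAC
    have hAF : A ⊆ F := subset_union_left.trans hAC.subset
    have hCF : C ⊆ F := subset_union_right.trans hAC.subset
    rw [Matroid.restrict_ground_eq, mrank_restrict M hAF, mrank_restrict M hCF,
      mrank_restrict M (subset_refl F)] at hsum
    set A' := M.closure A with hA'def
    set C' := M.closure C with hC'def
    have hA'F : A' ⊆ F := by rw [← hF.closure]; exact M.closure_subset_closure hAF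
    have hC'F : C' ⊆ F := by rw [← hF.closure]; exact M.closure_subset_closure hCF
    have hA'ne : A'.Nonempty := hAne.mono (M.subset_closure A (hAF.trans hFE))
    have hC'ne : C'.Nonempty := hCne.mono (M.subset_closure C (hCF.trans hFE))
    have hrA : mrank M A' = mrank M A := mrank_closure_eq (hAF.trans hFE)
    have hrC : mrank M C' = mrank M C := mrank_closure_eq (hCF.trans hFE)
    have hUn : A' ∪ C' = F := by
      refine (union_subset hA'F hC'F).antisymm ?_
      rw [← hAC]
      exact union_subset_union (M.subset_closure A (hAF.trans hFE))
        (M.subset_closure C (hCF.trans hFE))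
    have hsub2 := mrank_submod (hA'F.trans hFE) (hC'F.trans hFE)
    rw [hUn] at hsub2
    have h0 : mrank M (A' ∩ C') = 0 := by omega
    have hdisj : A' ∩ C' = ∅ :=
      eq_empty_of_mrank_eq_zero hM (inter_subset_left.trans hA'F |>.trans hFE) h0
    have h1A : 1 ≤ mrank M A' := one_le_mrank hM (hA'F.trans hFE) hA'ne
    have h1C : 1 ≤ mrank M C' := one_le_mrank hM (hC'F.trans hFE) hC'ne
    have hltA : mrank M A' < n := by omega
    have hltC : mrank M C' < n := by omega
    obtain ⟨KA, hKA, hcovA, hsumA⟩ := ih (mrank M A') hltA A' rfl (closure_flat' M A) hA'ne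
    obtain ⟨KC, hKC, hcovC, hsumC⟩ := ih (mrank M C') hltC C' rfl (closure_flat' M C) hC'ne
    refine ⟨KA ∪ KC, ?_, ?_, ?_⟩
    · intro K hK
      rcases Finset.mem_union.mp hK with h | h
      exacts [hKA K h, hKC K h]
    · rw [Finset.coe_union, Set.sUnion_union, hcovA, hcovC, hUn]
    · have hdisjF : Disjoint KA KC := Finset.disjoint_left.mpr (fun {K} hKa hKc => by
        have h1 : K ⊆ A' := hcovA ▸ Set.subset_sUnion_of_mem (Finset.mem_coe.mpr hKa)
        have h2 : K ⊆ C' := hcovC ▸ Set.subset_sUnion_of_mem (Finset.mem_coe.mpr hKc)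
        obtain ⟨e, he⟩ := (hKA K hKa).2.1
        exact (Set.eq_empty_iff_forall_notMem.mp hdisj e) ⟨h1 he, h2 he⟩)
      rw [Finset.sum_union hdisjF, hsumA, hsumC, hrA, hrC]
      omega

end Decomp

section Key
variable [Fintype α] {M : Matroid α} {B : Set (Set α)}

lemma key_lemma (hM : MLoopless M) (hB : IsBuildingSet M B) {V Z : Set α}
    (hV : V ∈ B) (hZ : Z ∈ B) (hd : V ∩ Z = ∅)
    (hFB : M.closure (V ∪ Z) ∉ B) :
    M.closure (V ∪ Z) = V ∪ Z ∧
      ∀ H ∈ B, H ⊆ M.closure (V ∪ Z) → H ⊆ V ∨ H ⊆ Z := by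
  classical
  obtain ⟨hVf, hVne⟩ := hB.1 V hV
  obtain ⟨hZf, hZne⟩ := hB.1 Z hZ
  have hVE := hVf.subset_ground
  have hZE := hZf.subset_ground
  have hVZE : V ∪ Z ⊆ M.E := union_subset hVE hZE
  set F := M.closure (V ∪ Z) with hFdef
  have hFf : M.IsFlat F := closure_flat' M _
  have hFE : F ⊆ M.E := hFf.subset_ground
  have hVF : V ⊆ F := subset_union_left.trans (M.subset_closure _ hVZE)
  have hZF : Z ⊆ F := subset_union_right.trans (M.subset_closure _ hVZE)
  have hFne : F.Nonempty := hVne.mono hVF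
  obtain ⟨𝒦, h𝒦, hcov, hsumK⟩ := decomp hM (mrank M F) F rfl hFf hFne
  have hKB : ∀ K ∈ 𝒦, K ∈ B := fun K hK =>
    hB.2.1 K (h𝒦 K hK).1 (h𝒦 K hK).2.1 (h𝒦 K hK).2.2
  have hKF : ∀ K ∈ 𝒦, K ⊆ F := fun K hK =>
    hcov ▸ Set.subset_sUnion_of_mem (Finset.mem_coe.mpr hK)
  have hclF : ∀ {P Q : Set α}, P ⊆ F → Q ⊆ F → M.closure (P ∪ Q) ⊆ F := by
    intro P Q hP hQ
    have h := M.closure_subset_closure (union_subset hP hQ)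
    rwa [hFdef, M.closure_closure] at h
  have exists_block : ∀ (W : Set α), W ∈ B → W ⊆ F →
      ∃ G, (G ∈ B ∧ W ⊆ G ∧ G ⊆ F) ∧
        ∀ G', (G' ∈ B ∧ W ⊆ G' ∧ G' ⊆ F) → G ⊆ G' → G = G' := by
    intro W hWB hWF
    obtain ⟨G, hG, hGmax⟩ := Set.Finite.exists_maximalFor id
      {G | G ∈ B ∧ W ⊆ G ∧ G ⊆ F} (Set.toFinite _) ⟨W, hWB, subset_rfl, hWF⟩
    exact ⟨G, hG, fun G' hG' hsub => hsub.antisymm (hGmax hG' hsub)⟩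
  obtain ⟨Gv, ⟨hGvB, hVGv, hGvF⟩, hGvmax⟩ := exists_block V hV hVF
  obtain ⟨Gz, ⟨hGzB, hZGz, hGzF⟩, hGzmax⟩ := exists_block Z hZ hZF
  have absorb_v : ∀ H ∈ B, H ⊆ F → (H ∩ Gv).Nonempty → H ⊆ Gv := by
    intro H hH hHF hmeet
    have hGvE : Gv ⊆ M.E := (hB.1 _ hGvB).1.subset_ground
    have hHE : H ⊆ M.E := (hB.1 _ hH).1.subset_ground
    have hJB : M.closure (H ∪ Gv) ∈ B := hB.2.2 H hH Gv hGvB hmeet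
    have hJF : M.closure (H ∪ Gv) ⊆ F := hclF hHF hGvF
    have hGvJ : Gv ⊆ M.closure (H ∪ Gv) :=
      subset_union_right.trans (M.subset_closure _ (union_subset hHE hGvE))
    have heq : Gv = M.closure (H ∪ Gv) :=
      hGvmax _ ⟨hJB, hVGv.trans hGvJ, hJF⟩ hGvJ
    rw [heq]
    exact subset_union_left.trans (M.subset_closure _ (union_subset hHE hGvE))
  have absorb_z : ∀ H ∈ B, H ⊆ F → (H ∩ Gz).Nonempty → H ⊆ Gz := by
    intro H hH hHF hmeet
    have hGzE : Gz ⊆ M.E := (hB.1 _ hGzB).1.subset_ground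
    have hHE : H ⊆ M.E := (hB.1 _ hH).1.subset_ground
    have hJB : M.closure (H ∪ Gz) ∈ B := hB.2.2 H hH Gz hGzB hmeet
    have hJF : M.closure (H ∪ Gz) ⊆ F := hclF hHF hGzF
    have hGzJ : Gz ⊆ M.closure (H ∪ Gz) :=
      subset_union_right.trans (M.subset_closure _ (union_subset hHE hGzE))
    have heq : Gz = M.closure (H ∪ Gz) :=
      hGzmax _ ⟨hJB, hZGz.trans hGzJ, hJF⟩ hGzJ
    rw [heq]
    exact subset_union_left.trans (M.subset_closure _ (union_subset hHE hGzE))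
  have hGvGz : Gv ∩ Gz = ∅ := by
    by_contra hne
    have hmeet : (Gv ∩ Gz).Nonempty := Set.nonempty_iff_ne_empty.mpr hne
    have hJB := hB.2.2 Gv hGvB Gz hGzB hmeet
    have hJF : M.closure (Gv ∪ Gz) ⊆ F := hclF hGvF hGzF
    have hFJ : F ⊆ M.closure (Gv ∪ Gz) := by
      rw [hFdef]
      exact M.closure_subset_closure (union_subset_union hVGv hZGz)
    exact hFB ((hFJ.antisymm hJF) ▸ hJB)
  set fv := 𝒦.filter (fun K => K ⊆ Gv) with hfvdef
  set fz := 𝒦.filter (fun K => K ⊆ Gz) with hfzdef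
  have hGvcov : Gv ⊆ ⋃₀ ↑fv := by
    intro e he
    have heF : e ∈ F := hGvF he
    rw [← hcov] at heF
    obtain ⟨K, hK, heK⟩ := heF
    have hKm : K ∈ 𝒦 := Finset.mem_coe.mp hK
    have hKGv : K ⊆ Gv := absorb_v K (hKB K hKm) (hKF K hKm) ⟨e, heK, he⟩
    exact ⟨K, Finset.mem_coe.mpr (Finset.mem_filter.mpr ⟨hKm, hKGv⟩), heK⟩
  have hGzcov : Gz ⊆ ⋃₀ ↑fz := by
    intro e he
    have heF : e ∈ F := hGzF he
    rw [← hcov] at heF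
    obtain ⟨K, hK, heK⟩ := heF
    have hKm : K ∈ 𝒦 := Finset.mem_coe.mp hK
    have hKGz : K ⊆ Gz := absorb_z K (hKB K hKm) (hKF K hKm) ⟨e, heK, he⟩
    exact ⟨K, Finset.mem_coe.mpr (Finset.mem_filter.mpr ⟨hKm, hKGz⟩), heK⟩
  have hfvz : Disjoint fv fz := Finset.disjoint_left.mpr (fun {K} h1 h2 => by
    obtain ⟨hKm, hKv⟩ := Finset.mem_filter.mp h1
    obtain ⟨-, hKz⟩ := Finset.mem_filter.mp h2
    obtain ⟨e, he⟩ := (h𝒦 K hKm).2.1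
    exact (Set.eq_empty_iff_forall_notMem.mp hGvGz e) ⟨hKv he, hKz he⟩)
  have c1 : mrank M F ≤ mrank M V + mrank M Z := by
    rw [hFdef, mrank_closure_eq hVZE]; exact mrank_union_le M V Z
  have c2 : mrank M V ≤ mrank M Gv := mrank_mono hVGv
  have c3 : mrank M Z ≤ mrank M Gz := mrank_mono hZGz
  have c4 : mrank M Gv ≤ ∑ K ∈ fv, mrank M K :=
    (mrank_mono hGvcov).trans (mrank_sUnion_le M fv)
  have c5 : mrank M Gz ≤ ∑ K ∈ fz, mrank M K :=
    (mrank_mono hGzcov).trans (mrank_sUnion_le M fz)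
  have c6 : ∑ K ∈ fv, mrank M K + ∑ K ∈ fz, mrank M K = ∑ K ∈ fv ∪ fz, mrank M K :=
    (Finset.sum_union hfvz).symm
  have hsubu : fv ∪ fz ⊆ 𝒦 :=
    Finset.union_subset (Finset.filter_subset _ _) (Finset.filter_subset _ _)
  have c7 : ∑ K ∈ fv ∪ fz, mrank M K ≤ ∑ K ∈ 𝒦, mrank M K :=
    Finset.sum_le_sum_of_subset hsubu
  have hVeq : V = Gv :=
    flat_eq_of_mrank_le hVf (hB.1 _ hGvB).1 hVGv (by omega)
  have hZeq : Z = Gz :=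
    flat_eq_of_mrank_le hZf (hB.1 _ hGzB).1 hZGz (by omega)
  have hKfvz : 𝒦 = fv ∪ fz := by
    by_contra hne
    have hns : ¬ 𝒦 ⊆ fv ∪ fz := fun h => hne (h.antisymm hsubu)
    obtain ⟨K, hKm, hKn⟩ := Finset.not_subset.mp hns
    have hpos : 0 < mrank M K :=
      one_le_mrank hM ((hKF K hKm).trans hFE) (h𝒦 K hKm).2.1
    have hlt : ∑ K ∈ fv ∪ fz, mrank M K < ∑ K ∈ 𝒦, mrank M K :=
      Finset.sum_lt_sum_of_subset hsubu hKm hKn hpos (fun j _ _ => Nat.zero_le _)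
    omega
  have hFVZ : F = V ∪ Z := by
    refine Subset.antisymm ?_ (union_subset hVF hZF)
    intro e he
    rw [← hcov] at he
    obtain ⟨K, hK, heK⟩ := he
    have hKm : K ∈ 𝒦 := Finset.mem_coe.mp hK
    rw [hKfvz] at hKm
    rcases Finset.mem_union.mp hKm with h | h
    · exact Or.inl (hVeq ▸ (Finset.mem_filter.mp h).2 heK)
    · exact Or.inr (hZeq ▸ (Finset.mem_filter.mp h).2 heK)
  refine ⟨hFVZ, ?_⟩
  intro H hH hHF
  obtain ⟨h, hh⟩ := (hB.1 H hH).2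
  have hhVZ : h ∈ V ∪ Z := hFVZ ▸ hHF hh
  rcases hhVZ with hv | hz
  · left
    have := absorb_v H hH hHF ⟨h, hh, hVeq ▸ hv⟩
    rwa [← hVeq] at this
  · right
    have := absorb_z H hH hHF ⟨h, hh, hZeq ▸ hz⟩
    rwa [← hZeq] at this

end Key

section Main
variable [Fintype α] {M : Matroid α} {B N : Set (Set α)} {X Y Z U V W : Set α}

lemma not_subset_of_disj (hne : V.Nonempty) (h : V ∩ Z = ∅) : ¬ V ⊆ Z := by
  obtain ⟨e, he⟩ := hne
  intro hsub
  exact (Set.eq_empty_iff_forall_notMem.mp h e) ⟨he, hsub he⟩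

lemma nested_pair (hN : IsNested M B N) (hU : U ∈ N) (hV : V ∈ N)
    (h1 : ¬ U ⊆ V) (h2 : ¬ V ⊆ U) : M.closure (U ∪ V) ∉ B := by
  have hne : U ≠ V := fun h => h1 (h ▸ Subset.rfl)
  have hmem : ({U, V} : Set (Set α)) ⊆ N := by
    intro S hS
    simp only [Set.mem_insert_iff, Set.mem_singleton_iff] at hS
    rcases hS with rfl | rfl
    exacts [hU, hV]
  have hnt : ({U, V} : Set (Set α)).Nontrivial := ⟨U, by simp, V, by simp, hne⟩
  have hp : ({U, V} : Set (Set α)).Pairwise Incomp := by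
    intro a ha b hb hab
    simp only [Set.mem_insert_iff, Set.mem_singleton_iff] at ha hb
    rcases ha with rfl | rfl <;> rcases hb with rfl | rfl
    · exact absurd rfl hab
    · exact ⟨h1, h2⟩
    · exact ⟨h2, h1⟩
    · exact absurd rfl hab
  have h := hN.2.2 {U, V} hmem hnt hp
  rwa [Set.sUnion_pair] at h

lemma nested_comparable (hB : IsBuildingSet M B) (hN : IsNested M B N)
    (hU : U ∈ N) (hV : V ∈ N) (hmeet : (U ∩ V).Nonempty) : U ⊆ V ∨ V ⊆ U := by
  by_contra hcon
  push_neg at hcon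
  exact nested_pair hN hU hV hcon.1 hcon.2 (hB.2.2 U (hN.1 hU) V (hN.1 hV) hmeet)

lemma trich (hB : IsBuildingSet M B) (hN : IsNested M B N)
    (hW : W ∈ N) (hZ : Z ∈ N) (hne : W ≠ Z) :
    W ⊂ Z ∨ Z ⊂ W ∨ W ∩ Z = ∅ := by
  by_cases hd : W ∩ Z = ∅
  · exact Or.inr (Or.inr hd)
  rcases nested_comparable hB hN hW hZ (Set.nonempty_iff_ne_empty.mpr hd) with h | h
  · exact Or.inl (h.ssubset_of_ne hne)
  · exact Or.inr (Or.inl (h.ssubset_of_ne hne.symm))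

lemma tau_of_subset (M : Matroid α) (h : X ⊆ Z) : tau M Z X = X := by
  unfold tau; rw [if_pos h]

lemma tau_of_not_subset {M : Matroid α} (hns : ¬ X ⊆ Z) :
    tau M Z X = M.closure (X ∪ Z) \ Z := by
  unfold tau; rw [if_neg hns]

lemma tau_of_ssuper {M : Matroid α} (hXf : M.IsFlat X) (h : Z ⊆ X) (hns : ¬ X ⊆ Z) :
    tau M Z X = X \ Z := by
  unfold tau; rw [if_neg hns, union_eq_self_of_subset_right h, hXf.closure]

lemma subset_tau_of_disj (hXE : X ⊆ M.E) (hZE : Z ⊆ M.E) (hd : X ∩ Z = ∅)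
    (hXne : X.Nonempty) : X ⊆ tau M Z X := by
  rw [tau_of_not_subset (not_subset_of_disj hXne hd)]
  intro x hx
  exact ⟨M.subset_closure _ (union_subset hXE hZE) (Or.inl hx),
    fun hz => (Set.eq_empty_iff_forall_notMem.mp hd x) ⟨hx, hz⟩⟩

lemma tau_reflect (hM : MLoopless M) (hB : IsBuildingSet M B) (hN : IsNested M B N)
    (hZ : Z ∈ N) (hU : U ∈ N) (hV : V ∈ N) (hUZ : U ≠ Z) (hVZ : V ≠ Z)
    (hsub : tau M Z U ⊆ tau M Z V) : U ⊆ V := by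
  obtain ⟨hUf, hUne⟩ := hB.1 U (hN.1 hU)
  obtain ⟨hVf, hVne⟩ := hB.1 V (hN.1 hV)
  obtain ⟨hZf, hZne⟩ := hB.1 Z (hN.1 hZ)
  have hUE := hUf.subset_ground
  have hVE := hVf.subset_ground
  have hZE := hZf.subset_ground
  rcases trich hB hN hU hZ hUZ with hu | hu | hu <;>
    rcases trich hB hN hV hZ hVZ with hv | hv | hv
  · rwa [tau_of_subset M hu.subset, tau_of_subset M hv.subset] at hsub
  · exfalso
    rw [tau_of_subset M hu.subset,
      tau_of_ssuper hVf hv.subset (fun h => hv.ne (hv.subset.antisymm h))] at hsub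
    obtain ⟨e, he⟩ := hUne
    exact (hsub he).2 (hu.subset he)
  · exfalso
    rw [tau_of_subset M hu.subset, tau_of_not_subset (not_subset_of_disj hVne hv)] at hsub
    obtain ⟨e, he⟩ := hUne
    exact (hsub he).2 (hu.subset he)
  · exfalso
    rw [tau_of_ssuper hUf hu.subset (fun h => hu.ne (hu.subset.antisymm h)),
      tau_of_subset M hv.subset] at hsub
    obtain ⟨e, heU, heZ⟩ := Set.exists_of_ssubset hu
    exact heZ (hv.subset (hsub ⟨heU, heZ⟩))
  · rw [tau_of_ssuper hUf hu.subset (fun h => hu.ne (hu.subset.antisymm h)),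
      tau_of_ssuper hVf hv.subset (fun h => hv.ne (hv.subset.antisymm h))] at hsub
    intro x hx
    by_cases hxZ : x ∈ Z
    · exact hv.subset hxZ
    · exact (hsub ⟨hx, hxZ⟩).1
  · exfalso
    have hv' : Z ∩ V = ∅ := by rw [Set.inter_comm]; exact hv
    rw [tau_of_ssuper hUf hu.subset (fun h => hu.ne (hu.subset.antisymm h)),
      tau_of_not_subset (not_subset_of_disj hVne hv)] at hsub
    have hUF : U ⊆ M.closure (V ∪ Z) := by
      intro x hx
      by_cases hxZ : x ∈ Z
      · exact M.subset_closure _ (union_subset hVE hZE) (Or.inr hxZ)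
      · exact (hsub ⟨hx, hxZ⟩).1
    have hFB : M.closure (V ∪ Z) ∉ B :=
      nested_pair hN hV hZ (not_subset_of_disj hVne hv) (not_subset_of_disj hZne hv')
    rcases (key_lemma hM hB (hN.1 hV) (hN.1 hZ) hv hFB).2 U (hN.1 hU) hUF with h | h
    · obtain ⟨e, he⟩ := hZne
      exact (Set.eq_empty_iff_forall_notMem.mp hv e) ⟨h (hu.subset he), he⟩
    · exact hu.ne (hu.subset.antisymm h)
  · exfalso
    have htau : U ⊆ tau M Z U := subset_tau_of_disj hUE hZE hu hUne
    rw [tau_of_subset M hv.subset] at hsub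
    obtain ⟨e, he⟩ := hUne
    exact (Set.eq_empty_iff_forall_notMem.mp hu e) ⟨he, hv.subset (hsub (htau he))⟩
  · have htau : U ⊆ tau M Z U := subset_tau_of_disj hUE hZE hu hUne
    rw [tau_of_ssuper hVf hv.subset (fun h => hv.ne (hv.subset.antisymm h))] at hsub
    intro x hx
    exact (hsub (htau hx)).1
  · have hv' : Z ∩ V = ∅ := by rw [Set.inter_comm]; exact hv
    have htau : U ⊆ tau M Z U := subset_tau_of_disj hUE hZE hu hUne
    rw [tau_of_not_subset (not_subset_of_disj hVne hv)] at hsub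
    have hUF : U ⊆ M.closure (V ∪ Z) := fun x hx => (hsub (htau hx)).1
    have hFB : M.closure (V ∪ Z) ∉ B :=
      nested_pair hN hV hZ (not_subset_of_disj hVne hv) (not_subset_of_disj hZne hv')
    rcases (key_lemma hM hB (hN.1 hV) (hN.1 hZ) hv hFB).2 U (hN.1 hU) hUF with h | h
    · exact h
    · exfalso
      obtain ⟨e, he⟩ := hUne
      exact (Set.eq_empty_iff_forall_notMem.mp hu e) ⟨he, h he⟩

lemma tau_sreflect (hM : MLoopless M) (hB : IsBuildingSet M B) (hN : IsNested M B N)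
    (hZ : Z ∈ N) (hU : U ∈ N) (hV : V ∈ N) (hUZ : U ≠ Z) (hVZ : V ≠ Z)
    (hsub : tau M Z U ⊂ tau M Z V) : U ⊂ V :=
  (tau_reflect hM hB hN hZ hU hV hUZ hVZ hsub.subset).ssubset_of_ne
    (fun h => hsub.ne (by rw [h]))

end Main

/-- `τ_Z` preserves covering relations in the forest poset of a
nested set. -/
theorem tau_covers {α : Type*} [Fintype α] [LinearOrder α]
    (M : Matroid α) (hM : MLoopless M)
    (B : Set (Set α)) (hB : IsBuildingSet M B)
    (N : Set (Set α)) (hN : IsNested M B N)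
    (Z : Set α) (hZ : Z ∈ N)
    (X Y : Set α) (hX : X ∈ N \ {Z}) (hY : Y ∈ N \ {Z})
    (hXY : X ⊂ Y) (hcov : ¬ ∃ W ∈ N, X ⊂ W ∧ W ⊂ Y) :
    tau M Z X ⊂ tau M Z Y ∧
      ¬ ∃ W ∈ N \ {Z}, tau M Z X ⊂ tau M Z W ∧ tau M Z W ⊂ tau M Z Y := by
  have hXN : X ∈ N := hX.1
  have hYN : Y ∈ N := hY.1
  have hXZ : X ≠ Z := fun h => hX.2 (by simp [h])
  have hYZ : Y ≠ Z := fun h => hY.2 (by simp [h])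
  obtain ⟨hXf, hXne⟩ := hB.1 X (hN.1 hXN)
  obtain ⟨hYf, hYne⟩ := hB.1 Y (hN.1 hYN)
  obtain ⟨hZf, hZne⟩ := hB.1 Z (hN.1 hZ)
  have hXE := hXf.subset_ground
  have hYE := hYf.subset_ground
  have hZE := hZf.subset_ground
  constructor
  · rcases trich hB hN hXN hZ hXZ with hx | hx | hx
    · rcases trich hB hN hYN hZ hYZ with hy | hy | hy
      · rw [tau_of_subset M hx.subset, tau_of_subset M hy.subset]; exact hXY
      · exact absurd ⟨Z, hZ, hx, hy⟩ hcov
      · exfalso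
        obtain ⟨e, he⟩ := hXne
        exact (Set.eq_empty_iff_forall_notMem.mp hy e) ⟨hXY.subset he, hx.subset he⟩
    · have hy : Z ⊂ Y := hx.trans hXY
      rw [tau_of_ssuper hXf hx.subset (fun h => hx.ne (hx.subset.antisymm h)),
        tau_of_ssuper hYf hy.subset (fun h => hy.ne (hy.subset.antisymm h))]
      obtain ⟨y, hyY, hyX⟩ := Set.exists_of_ssubset hXY
      refine (Set.diff_subset_diff_left hXY.subset).ssubset_of_ne ?_
      intro h
      have hyZ : y ∉ Z := fun hz => hyX (hx.subset hz)
      have hmem : y ∈ Y \ Z := ⟨hyY, hyZ⟩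
      rw [← h] at hmem
      exact hyX hmem.1
    · have hFB : M.closure (X ∪ Z) ∉ B :=
        nested_pair hN hXN hZ (not_subset_of_disj hXne hx)
          (not_subset_of_disj hZne (by rw [Set.inter_comm]; exact hx))
      rcases trich hB hN hYN hZ hYZ with hy | hy | hy
      · exfalso
        obtain ⟨e, he⟩ := hXne
        exact (Set.eq_empty_iff_forall_notMem.mp hx e) ⟨he, hy.subset (hXY.subset he)⟩
      · rw [tau_of_not_subset (not_subset_of_disj hXne hx),
          tau_of_ssuper hYf hy.subset (fun h => hy.ne (hy.subset.antisymm h))]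
        have hclY : M.closure (X ∪ Z) ⊆ Y := by
          rw [← hYf.closure]
          exact M.closure_subset_closure (union_subset hXY.subset hy.subset)
        refine (Set.diff_subset_diff_left hclY).ssubset_of_ne ?_
        intro h
        apply hFB
        have heq : M.closure (X ∪ Z) = Y := by
          refine hclY.antisymm ?_
          intro y hyY
          by_cases hyZ : y ∈ Z
          · exact M.subset_closure _ (union_subset hXE hZE) (Or.inr hyZ)
          · have hmem : y ∈ Y \ Z := ⟨hyY, hyZ⟩
            rw [← h] at hmem
            exact hmem.1
        rw [heq]
        exact hN.1 hYN
      · rw [tau_of_not_subset (not_subset_of_disj hXne hx),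
          tau_of_not_subset (not_subset_of_disj hYne hy)]
        refine (Set.diff_subset_diff_left
          (M.closure_subset_closure (union_subset_union_left Z hXY.subset))).ssubset_of_ne ?_
        intro h
        have hYF : Y ⊆ M.closure (X ∪ Z) := by
          intro y hyY
          have hyZ : y ∉ Z := fun hz => (Set.eq_empty_iff_forall_notMem.mp hy y) ⟨hyY, hz⟩
          have hmem : y ∈ M.closure (Y ∪ Z) \ Z :=
            ⟨M.subset_closure _ (union_subset hYE hZE) (Or.inl hyY), hyZ⟩
          rw [← h] at hmem
          exact hmem.1
        rcases (key_lemma hM hB (hN.1 hXN) (hN.1 hZ) hx hFB).2 Y (hN.1 hYN) hYF with hc | hc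
        · obtain ⟨y, h1, h2⟩ := Set.exists_of_ssubset hXY
          exact h2 (hc h1)
        · obtain ⟨e, he⟩ := hYne
          exact (Set.eq_empty_iff_forall_notMem.mp hy e) ⟨he, hc he⟩
  · rintro ⟨W, hW, h1, h2⟩
    have hWZ : W ≠ Z := fun h => hW.2 (by simp [h])
    exact hcov ⟨W, hW.1, tau_sreflect hM hB hN hZ hXN hW.1 hXZ hWZ h1,
      tau_sreflect hM hB hN hZ hW.1 hYN hWZ hYZ h2⟩
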